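/- For every ε with 0 < ε < 1/2, the proportion of eigenvalues of R_N lying in the middle range [ε, 1−ε] tends to zero, i.e. lim_{N→∞} #{ j : ε ≤ λ_j(N) ≤ 1−ε }/N = 0; consequently, asymptotically a fraction m(J)/(2π) of the eigenvalues are within ε of 1 and the remaining fraction 1 − m(J)/(2π) are within ε of 0 (so the numerical rank of R_N is asymptotic to N·m(J)/(2π)). -/

import Mathlib

open MeasureTheory Filter Topology Matrix

/-- Fourier coefficients of the indicator of the band `J`:
`ρ(t) = (1/(2π)) ∫_J e^{i t ω} dω`. -/
noncomputable def rho (J : Set ℝ) (t : ℤ) : ℂ :=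
  (1 / (2 * Real.pi)) * ∫ ω in J, Complex.exp (Complex.I * (t : ℂ) * (ω : ℂ))

/-- The `N × N` Toeplitz matrix with `(j,k)` entry `ρ(j - k)`. -/
noncomputable def Rmat (J : Set ℝ) (N : ℕ) : Matrix (Fin N) (Fin N) ℂ :=
  Matrix.of fun j k => rho J ((j : ℤ) - (k : ℤ))

/-!
Write `r = m(J)/(2π)` and `λ_j` for the eigenvalues of `R_N`. The trace gives
`∑ λ_j = N ρ(0) = N r`, and the squared Frobenius norm gives `∑ λ_j² = ∑_{j,k<N} |ρ(j-k)|²`,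
which is the sum of the first `N` symmetric partial sums of `∑_t |ρ(t)|²`. By Parseval that
series sums to `r`, so by Cesàro `∑ λ_j² = N r + o(N)`, that is `∑ λ_j (1 - λ_j) = o(N)`.
As the `λ_j` lie in `[0, 1]`, each eigenvalue in `[ε, 1 - ε]` contributes at least `ε (1 - ε)`
to this sum, and `ε (1 - ε) |[λ > 1 - ε] - λ| ≤ λ (1 - λ)`, so the number of eigenvalues above
`1 - ε` is `∑ λ_j + o(N) = N r + o(N)`. The count below `ε` follows by applying this to the
`1 - λ_j`.
-/

open Finset

section Toeplitz

variable {M : Type*} [AddCommMonoid M] (a : ℤ → M)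

lemma sum_Icc_neg_natCast_succ (n : ℕ) :
    ∑ t ∈ Icc (-((n + 1 : ℕ) : ℤ)) (n + 1 : ℕ), a t
      = ∑ t ∈ Icc (-(n : ℤ)) n, a t + (a (n + 1) + a (-(n + 1))) := by
  have hIcc : Icc (-((n + 1 : ℕ) : ℤ)) (n + 1 : ℕ)
      = insert (-(n : ℤ) - 1) (insert ((n : ℤ) + 1) (Icc (-(n : ℤ)) n)) := by
    rw [insert_Icc_right_eq_Icc_add_one (by omega), insert_Icc_left_eq_Icc_sub_one (by omega)]
    push_cast; ring_nf
  rw [hIcc, sum_insert (by simp only [mem_insert, mem_Icc]; omega), sum_insert (by simp), neg_add']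
  abel

lemma sum_range_add_sum_range_eq_sum_Icc (n : ℕ) :
    ∑ j ∈ range n, (a (j - n) + a (n - j)) + a 0 = ∑ t ∈ Icc (-(n : ℤ)) n, a t := by
  induction n with
  | zero => simp
  | succ n ih =>
    rw [sum_range_succ', sum_Icc_neg_natCast_succ, ← ih]
    push_cast
    simp only [add_sub_add_right_eq_sub, zero_sub, sub_zero]
    abel

lemma sum_range_sum_range_sub_eq_sum_range_sum_Icc (N : ℕ) :
    ∑ j ∈ range N, ∑ k ∈ range N, a (j - k) = ∑ n ∈ range N, ∑ t ∈ Icc (-(n : ℤ)) n, a t := by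
  induction N with
  | zero => simp
  | succ n ih =>
    rw [sum_range_succ (fun m : ℕ => ∑ t ∈ Icc (-(m : ℤ)) m, a t), ← ih,
      ← sum_range_add_sum_range_eq_sum_Icc]
    simp only [sum_range_succ, sum_add_distrib, sub_self]
    abel

end Toeplitz

lemma tendsto_inv_smul_sum_range_sum_range_sub {E : Type*} [NormedAddCommGroup E]
    [NormedSpace ℝ E] {a : ℤ → E} {r : E} (hr : HasSum a r) :
    Tendsto (fun N : ℕ => (N : ℝ)⁻¹ • ∑ j ∈ range N, ∑ k ∈ range N, a (j - k)) atTop (𝓝 r) := by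
  simp only [sum_range_sum_range_sub_eq_sum_range_sum_Icc]
  exact (hr.comp tendsto_Icc_neg).cesaro_smul

section PointwiseBounds

variable {ε x : ℝ}

lemma mul_one_sub_le_sub_sq_of_mem_Icc (hx : x ∈ Set.Icc ε (1 - ε)) :
    ε * (1 - ε) ≤ x - x ^ 2 := by
  nlinarith [hx.1, hx.2]

lemma mul_abs_ite_sub_le_sub_sq (hx : x ∈ Set.Icc (0 : ℝ) 1) (hε0 : 0 ≤ ε) (hε1 : ε ≤ 1) :
    ε * (1 - ε) * |(if 1 - ε < x then 1 else 0) - x| ≤ x - x ^ 2 := by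
  obtain ⟨hx0, hx1⟩ := hx
  split_ifs with h
  · rw [abs_of_nonneg (by linarith)]
    nlinarith [mul_nonneg (sub_nonneg.2 hx1) (show 0 ≤ x - ε * (1 - ε) by nlinarith)]
  · rw [zero_sub, abs_neg, abs_of_nonneg hx0]
    nlinarith [mul_nonneg hε0 hx0]

end PointwiseBounds

section FiniteFamily

variable {ι : Type*} [Fintype ι] {x : ι → ℝ} {ε : ℝ}

lemma natCast_ncard_setOf (p : ι → Prop) [DecidablePred p] :
    ({i | p i}.ncard : ℝ) = ∑ i, if p i then 1 else 0 := by
  rw [Set.ncard_eq_toFinset_card', Set.toFinset_ofPred, natCast_card_filter]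

lemma mul_ncard_mem_Icc_le (hx : ∀ i, x i ∈ Set.Icc (0 : ℝ) 1) :
    ε * (1 - ε) * {i | x i ∈ Set.Icc ε (1 - ε)}.ncard ≤ ∑ i, (x i - x i ^ 2) := by
  classical
  rw [natCast_ncard_setOf, mul_sum]
  refine sum_le_sum fun i _ => ?_
  split_ifs with h
  · simpa using mul_one_sub_le_sub_sq_of_mem_Icc h
  · nlinarith [(hx i).1, (hx i).2]

lemma mul_abs_ncard_sub_sum_le (hx : ∀ i, x i ∈ Set.Icc (0 : ℝ) 1) (hε0 : 0 ≤ ε) (hε1 : ε ≤ 1) :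
    ε * (1 - ε) * |({i | 1 - ε < x i}.ncard : ℝ) - ∑ i, x i| ≤ ∑ i, (x i - x i ^ 2) := by
  classical
  rw [natCast_ncard_setOf, ← sum_sub_distrib]
  calc ε * (1 - ε) * |∑ i, ((if 1 - ε < x i then 1 else 0) - x i)|
      ≤ ∑ i, ε * (1 - ε) * |(if 1 - ε < x i then 1 else 0) - x i| := by
        rw [← mul_sum]
        exact mul_le_mul_of_nonneg_left (abs_sum_le_sum_abs _ _) (by nlinarith)
    _ ≤ ∑ i, (x i - x i ^ 2) := sum_le_sum fun i _ => mul_abs_ite_sub_le_sub_sq (hx i) hε0 hε1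

end FiniteFamily

section Asymptotics

variable {x : (N : ℕ) → Fin N → ℝ} {r ε : ℝ}

theorem tendsto_ncard_mem_Icc_div (hx : ∀ N j, x N j ∈ Set.Icc (0 : ℝ) 1)
    (hdefect : Tendsto (fun N : ℕ => (∑ j, (x N j - x N j ^ 2)) / N) atTop (𝓝 0))
    (hε0 : 0 < ε) (hε1 : ε < 1) :
    Tendsto (fun N : ℕ => ({j | x N j ∈ Set.Icc ε (1 - ε)}.ncard : ℝ) / N) atTop (𝓝 0) := by
  have hc : 0 < ε * (1 - ε) := by nlinarith
  refine squeeze_zero (fun N => by positivity) (fun N => ?_)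
    (by simpa only [zero_div] using hdefect.div_const (ε * (1 - ε)))
  rw [le_div_iff₀ hc, div_mul_eq_mul_div, mul_comm]
  exact div_le_div_of_nonneg_right (mul_ncard_mem_Icc_le (hx N)) N.cast_nonneg

theorem tendsto_ncard_one_sub_lt_div (hx : ∀ N j, x N j ∈ Set.Icc (0 : ℝ) 1)
    (hmean : Tendsto (fun N : ℕ => (∑ j, x N j) / N) atTop (𝓝 r))
    (hdefect : Tendsto (fun N : ℕ => (∑ j, (x N j - x N j ^ 2)) / N) atTop (𝓝 0))
    (hε0 : 0 < ε) (hε1 : ε < 1) :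
    Tendsto (fun N : ℕ => ({j | 1 - ε < x N j}.ncard : ℝ) / N) atTop (𝓝 r) := by
  have hc : 0 < ε * (1 - ε) := by nlinarith
  refine tendsto_of_tendsto_of_dist hmean (squeeze_zero (fun N => dist_nonneg) (fun N => ?_)
    (by simpa only [zero_div] using hdefect.div_const (ε * (1 - ε))))
  rw [Real.dist_eq, ← sub_div, abs_div, Nat.abs_cast, abs_sub_comm, le_div_iff₀ hc,
    div_mul_eq_mul_div, mul_comm]
  exact div_le_div_of_nonneg_right (mul_abs_ncard_sub_sum_le (hx N) hε0.le hε1.le) N.cast_nonneg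

theorem tendsto_ncard_lt_div (hx : ∀ N j, x N j ∈ Set.Icc (0 : ℝ) 1)
    (hmean : Tendsto (fun N : ℕ => (∑ j, x N j) / N) atTop (𝓝 r))
    (hdefect : Tendsto (fun N : ℕ => (∑ j, (x N j - x N j ^ 2)) / N) atTop (𝓝 0))
    (hε0 : 0 < ε) (hε1 : ε < 1) :
    Tendsto (fun N : ℕ => ({j | x N j < ε}.ncard : ℝ) / N) atTop (𝓝 (1 - r)) := by
  have hmean' : Tendsto (fun N : ℕ => (∑ j, (1 - x N j)) / N) atTop (𝓝 (1 - r)) := by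
    refine (tendsto_const_nhds.sub hmean).congr' ?_
    filter_upwards [eventually_ne_atTop 0] with N hN
    rw [sum_sub_distrib, sub_div, sum_const, card_univ, Fintype.card_fin, nsmul_one,
      div_self (by exact_mod_cast hN)]
  have hdefect' : Tendsto (fun N : ℕ => (∑ j, ((1 - x N j) - (1 - x N j) ^ 2) : ℝ) / N)
      atTop (𝓝 0) := by
    refine hdefect.congr fun N => ?_
    congr 1
    exact sum_congr rfl fun j _ => by ring
  have hx' : ∀ N j, 1 - x N j ∈ Set.Icc (0 : ℝ) 1 := fun N j =>
    ⟨sub_nonneg.2 (hx N j).2, sub_le_self _ (hx N j).1⟩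
  simpa only [sub_lt_sub_iff_left] using
    tendsto_ncard_one_sub_lt_div hx' hmean' hdefect' hε0 hε1

end Asymptotics

lemma Matrix.IsHermitian.sum_sum_norm_sq_eq_sum_sq_eigenvalues {𝕜 n : Type*} [RCLike 𝕜]
    [Fintype n] [DecidableEq n] {A : Matrix n n 𝕜} (hA : A.IsHermitian) :
    ∑ i, ∑ j, ‖A i j‖ ^ 2 = ∑ i, hA.eigenvalues i ^ 2 := by
  have h_eig : (A * A).trace = ∑ i, (hA.eigenvalues i : 𝕜) ^ 2 := by
    conv_lhs => rw [hA.spectral_theorem, ← map_mul, Unitary.conjStarAlgAut_apply,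
      trace_mul_cycle, Unitary.coe_star_mul_self, one_mul, diagonal_mul_diagonal, trace_diagonal]
    simp [sq]
  have h_entries : (A * A).trace = ∑ i, ∑ j, (‖A i j‖ ^ 2 : 𝕜) := by
    refine sum_congr rfl fun i _ => sum_congr rfl fun j _ => ?_
    dsimp only
    rw [← hA.apply j i, RCLike.star_def, RCLike.mul_conj]
  exact_mod_cast h_entries.symm.trans h_eig

section Band

open Real

variable {J : Set ℝ}

lemma intervalIntegral_indicator_eq_setIntegral {E : Type*} [NormedAddCommGroup E]
    [NormedSpace ℝ E] {a b : ℝ} (hab : a ≤ b) (hJ : MeasurableSet J) (hJsub : J ⊆ Set.Icc a b)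
    (g : ℝ → E) : ∫ x in a..b, J.indicator g x = ∫ x in J, g x := by
  rw [intervalIntegral.integral_of_le hab, ← integral_Icc_eq_integral_Ioc,
    setIntegral_indicator hJ, Set.inter_eq_right.mpr hJsub]

lemma rho_eq_fourierCoeffOn (hJ : MeasurableSet J) (hJsub : J ⊆ Set.Icc (-π) π) (t : ℤ) :
    rho J t = fourierCoeffOn (neg_lt_self pi_pos) (J.indicator 1) (-t) := by
  have h_integrand : ∀ x : ℝ, fourier (-(-t)) (x : AddCircle (π - -π)) • J.indicator 1 x
      = J.indicator (fun ω : ℝ => Complex.exp (Complex.I * t * ω)) x := by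
    intro x
    by_cases hx : x ∈ J
    · rw [Set.indicator_of_mem hx, Set.indicator_of_mem hx, Pi.one_apply, smul_eq_mul, mul_one,
        fourier_coe_apply]
      congr 1
      push_cast
      field_simp
      ring
    · simp [hx]
  rw [fourierCoeffOn_eq_integral]
  simp_rw [h_integrand, intervalIntegral_indicator_eq_setIntegral (neg_le_self pi_pos.le) hJ hJsub]
  rw [rho, Complex.real_smul]
  push_cast
  ring

lemma rho_zero : rho J 0 = (volume J).toReal / (2 * π) := by
  simp only [rho, Int.cast_zero, mul_zero, zero_mul, Complex.exp_zero, setIntegral_const,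
    measureReal_def, Complex.real_smul, mul_one]
  ring

lemma hasSum_norm_sq_rho (hJ : MeasurableSet J) (hJsub : J ⊆ Set.Icc (-π) π) :
    HasSum (fun t => ‖rho J t‖ ^ 2) ((volume J).toReal / (2 * π)) := by
  have hL2 : MemLp (J.indicator 1 : ℝ → ℂ) 2 (volume.restrict (Set.Ioc (-π) π)) :=
    memLp_indicator_const 2 hJ (1 : ℂ) (Or.inr (measure_ne_top _ _))
  have h_norm_sq : ∀ x, ‖(J.indicator 1 : ℝ → ℂ) x‖ ^ 2 = J.indicator (fun _ => (1 : ℝ)) x := by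
    intro x
    by_cases hx : x ∈ J <;> simp [hx]
  have h_integral : (π - -π)⁻¹ • ∫ x in -π..π, ‖(J.indicator 1 : ℝ → ℂ) x‖ ^ 2
      = (volume J).toReal / (2 * π) := by
    simp_rw [h_norm_sq, intervalIntegral_indicator_eq_setIntegral (neg_le_self pi_pos.le) hJ hJsub,
      setIntegral_const, measureReal_def, smul_eq_mul, mul_one]
    ring
  have h := hasSum_sq_fourierCoeffOn (neg_lt_self pi_pos) hL2
  rw [h_integral, ← (Equiv.neg ℤ).hasSum_iff] at h
  simpa [Function.comp_def, rho_eq_fourierCoeffOn hJ hJsub] using h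

end Band

section ToeplitzMatrix

variable {J : Set ℝ} {N : ℕ}

lemma sum_eigenvalues_Rmat (hH : (Rmat J N).IsHermitian) :
    ∑ j, hH.eigenvalues j = N * ((volume J).toReal / (2 * Real.pi)) := by
  have h := hH.trace_eq_sum_eigenvalues
  simp only [trace, Matrix.diag, Rmat, of_apply, sub_self, rho_zero, sum_const, card_univ,
    Fintype.card_fin, nsmul_eq_mul] at h
  apply RCLike.ofReal_injective (K := ℂ)
  push_cast
  exact h.symm

lemma sum_sq_eigenvalues_Rmat (hH : (Rmat J N).IsHermitian) :
    ∑ j, hH.eigenvalues j ^ 2 = ∑ j ∈ range N, ∑ k ∈ range N, ‖rho J (j - k)‖ ^ 2 := by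
  rw [← hH.sum_sum_norm_sq_eq_sum_sq_eigenvalues, ← Fin.sum_univ_eq_sum_range]
  refine sum_congr rfl fun j _ => ?_
  rw [← Fin.sum_univ_eq_sum_range]
  rfl

lemma tendsto_sum_eigenvalues_Rmat_div (hH : ∀ N, (Rmat J N).IsHermitian) :
    Tendsto (fun N : ℕ => (∑ j, (hH N).eigenvalues j) / N) atTop
      (𝓝 ((volume J).toReal / (2 * Real.pi))) := by
  refine tendsto_const_nhds.congr' ?_
  filter_upwards [eventually_ne_atTop 0] with N hN
  rw [sum_eigenvalues_Rmat, mul_div_cancel_left₀ _ (by exact_mod_cast hN)]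

lemma tendsto_sum_sq_eigenvalues_Rmat_div (hJ : MeasurableSet J)
    (hJsub : J ⊆ Set.Icc (-Real.pi) Real.pi) (hH : ∀ N, (Rmat J N).IsHermitian) :
    Tendsto (fun N : ℕ => (∑ j, (hH N).eigenvalues j ^ 2) / N) atTop
      (𝓝 ((volume J).toReal / (2 * Real.pi))) := by
  refine (tendsto_inv_smul_sum_range_sum_range_sub (hasSum_norm_sq_rho hJ hJsub)).congr fun N => ?_
  rw [sum_sq_eigenvalues_Rmat, smul_eq_mul, inv_mul_eq_div]

end ToeplitzMatrix

/-- For every `0 < ε < 1/2`, the proportion of eigenvalues of `R_N` in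
`[ε, 1-ε]` tends to zero; asymptotically a fraction `m(J)/(2π)` of the eigenvalues are
within `ε` of `1` and a fraction `1 - m(J)/(2π)` are within `ε` of `0`. -/
theorem stmt12 (J : Set ℝ) (hJmeas : MeasurableSet J)
    (hJsub : J ⊆ Set.Icc (-Real.pi) Real.pi)
    (hH : ∀ N : ℕ, (Rmat J N).IsHermitian)
    (hlam : ∀ (N : ℕ) (j : Fin N), (hH N).eigenvalues j ∈ Set.Icc (0 : ℝ) 1)
    (ε : ℝ) (hε0 : 0 < ε) (hε1 : ε < 1 / 2) :
    Tendsto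
      (fun N : ℕ =>
        ({j : Fin N | (hH N).eigenvalues j ∈ Set.Icc ε (1 - ε)}.ncard : ℝ) / N)
      atTop (𝓝 0) ∧
    Tendsto
      (fun N : ℕ => ({j : Fin N | 1 - ε < (hH N).eigenvalues j}.ncard : ℝ) / N)
      atTop (𝓝 ((volume J).toReal / (2 * Real.pi))) ∧
    Tendsto
      (fun N : ℕ => ({j : Fin N | (hH N).eigenvalues j < ε}.ncard : ℝ) / N)
      atTop (𝓝 (1 - (volume J).toReal / (2 * Real.pi))) := by
  have hε : ε < 1 := by linarith
  have hmean := tendsto_sum_eigenvalues_Rmat_div hH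
  have hdefect : Tendsto
      (fun N : ℕ => (∑ j, ((hH N).eigenvalues j - (hH N).eigenvalues j ^ 2)) / N) atTop (𝓝 0) := by
    simpa only [sum_sub_distrib, sub_div, sub_self] using
      hmean.sub (tendsto_sum_sq_eigenvalues_Rmat_div hJmeas hJsub hH)
  exact ⟨tendsto_ncard_mem_Icc_div hlam hdefect hε0 hε,
    tendsto_ncard_one_sub_lt_div hlam hmean hdefect hε0 hε,
    tendsto_ncard_lt_div hlam hmean hdefect hε0 hε⟩
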